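/- For every m×n matrix A with entries in {0,1}, the longest increasing path length admits the column decomposition L(A) = max{ Σ_{j=1}^{n} (S^j_{k_j} − S^j_{k_{j−1}}) : 0 = k_0 ≤ k_1 ≤ ⋯ ≤ k_{n−1} ≤ k_n = m }, where S^j_k = Σ_{i=1}^{k} A_{i,j} is the number of 1's in column j among the first k rows. -/

import Mathlib

open scoped Classical

/-- `L(A)`: the maximal length of an increasing path in a 0-1 matrix `A`. -/
noncomputable def pathLen {m n : ℕ} (A : Fin m × Fin n → Bool) : ℕ :=
  sSup {k | ∃ f : Fin k → Fin m × Fin n,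
    (∀ i, A (f i) = true) ∧
    ∀ i j : Fin k, i < j → (f i).1 < (f j).1 ∧ (f i).2 ≤ (f j).2}

/-- `S^j_k`: the number of 1's in column `j` among the first `k` rows of `A`. -/
def colCount {m n : ℕ} (A : Fin m × Fin n → Bool) (j : Fin n) (k : ℕ) : ℕ :=
  (Finset.univ.filter fun i : Fin m => (i : ℕ) < k ∧ A (i, j) = true).card

/-!
A cut `0 = k₀ ≤ k₁ ≤ ⋯ ≤ kₙ = m` assigns the block of rows `[k_j, k_{j+1})` to column `j`, and
the sum in the statement counts the 1's lying in their row's block. These cells form a chain for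
the product order, hence an increasing path. Conversely, an increasing path visits its columns in
order, so letting `k_j` be one past the last row it uses in the columns before `j` puts every cell
of the path in its block.
-/

open Finset

-- Unlike `csSup_eq_csSup_of_forall_exists_le`, this lets `0 ∈ s` go unmatched in `t`: for `n = 0`
-- and `m > 0` there is no cut at all.
theorem Nat.sSup_eq_sSup_of_forall_exists_le {s t : Set ℕ} (hs : BddAbove s)
    (hst : ∀ x ∈ s, 0 < x → ∃ y ∈ t, x ≤ y) (hts : ∀ y ∈ t, ∃ x ∈ s, y ≤ x) :
    sSup s = sSup t := by
  obtain ⟨b, hb⟩ := hs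
  have ht : BddAbove t := ⟨b, fun y hy => (hts y hy).elim fun x hx => hx.2.trans (hb hx.1)⟩
  refine le_antisymm (csSup_le' fun x hx => ?_)
    (csSup_le' fun y hy => (hts y hy).elim fun x hx => le_csSup_of_le ⟨b, hb⟩ hx.1 hx.2)
  obtain rfl | hx0 := x.eq_zero_or_pos
  · exact Nat.zero_le _
  · obtain ⟨y, hy, hxy⟩ := hst x hx hx0
    exact le_csSup_of_le ht hy hxy

section Cuts

variable {n : ℕ}

theorem Fin.exists_castSucc_le_and_lt_succ {α : Type*} [LinearOrder α] (k : Fin (n + 1) → α)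
    {x : α} (h0 : k 0 ≤ x) (hlast : x < k (Fin.last n)) :
    ∃ j : Fin n, k j.castSucc ≤ x ∧ x < k j.succ := by
  induction n with
  | zero => exact absurd h0 (not_le.mpr hlast)
  | succ n ih =>
    by_cases hx : x < k (Fin.last n).castSucc
    · obtain ⟨j, hj⟩ := ih (k ∘ Fin.castSucc) h0 hx
      exact ⟨j.castSucc, hj⟩
    · exact ⟨Fin.last n, not_lt.mp hx, hlast⟩

theorem Monotone.le_of_castSucc_le_of_lt_succ {α : Type*} [Preorder α] {k : Fin (n + 1) → α}
    (hk : Monotone k) {j j' : Fin n} {x x' : α} (hj : k j.castSucc ≤ x) (hxx' : x ≤ x')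
    (hj' : x' < k j'.succ) : j ≤ j' := by
  by_contra! h
  exact (hj'.trans_le ((hk (Fin.succ_le_castSucc_iff.mpr h)).trans (hj.trans hxx'))).false

end Cuts

variable {m n : ℕ} (A : Fin m × Fin n → Bool)

def IsIncreasingPath {c : ℕ} (f : Fin c → Fin m × Fin n) : Prop :=
  (∀ i, A (f i) = true) ∧ ∀ i j : Fin c, i < j → (f i).1 < (f j).1 ∧ (f i).2 ≤ (f j).2

theorem pathLen_eq_sSup_isIncreasingPath :
    pathLen A = sSup {c | ∃ f : Fin c → Fin m × Fin n, IsIncreasingPath A f} :=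
  rfl

def cutCells (k : Fin (n + 1) → ℕ) : Finset (Fin m × Fin n) :=
  {p | k p.2.castSucc ≤ p.1 ∧ (p.1 : ℕ) < k p.2.succ ∧ A p = true}

theorem colCount_sub_colCount (j : Fin n) {a b : ℕ} (hab : a ≤ b) :
    colCount A j b - colCount A j a = #{i : Fin m | a ≤ i ∧ (i : ℕ) < b ∧ A (i, j) = true} := by
  rw [colCount, colCount, ← card_sdiff_of_subset
    (monotone_filter_right _ fun _ _ h => ⟨h.1.trans_le hab, h.2⟩)]
  congr 1
  ext i
  simp only [mem_sdiff, mem_filter, mem_univ, true_and]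
  grind

theorem card_cutCells {k : Fin (n + 1) → ℕ} (hk : Monotone k) :
    #(cutCells A k) = ∑ j : Fin n, (colCount A j (k j.succ) - colCount A j (k j.castSucc)) := by
  simp only [colCount_sub_colCount A _ (hk (Fin.castSucc_le_succ _)), cutCells, card_filter,
    Fintype.sum_prod_type]
  exact sum_comm

namespace IsIncreasingPath

variable {A} {c : ℕ} {f : Fin c → Fin m × Fin n}

theorem strictMono_fst (hf : IsIncreasingPath A f) : StrictMono fun i => (f i).1 :=
  fun i j h => (hf.2 i j h).1

theorem length_le (hf : IsIncreasingPath A f) : c ≤ m := by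
  simpa using Fintype.card_le_of_injective _ hf.strictMono_fst.injective

theorem lt_of_snd_lt (hf : IsIncreasingPath A f) {i j : Fin c} (h : (f i).2 < (f j).2) :
    i < j := by
  contrapose! h
  obtain rfl | hji := h.eq_or_lt
  · exact le_rfl
  · exact (hf.2 j i hji).2

theorem length_le_card_cutCells (hf : IsIncreasingPath A f) {k : Fin (n + 1) → ℕ}
    (hk : ∀ i, k (f i).2.castSucc ≤ (f i).1 ∧ ((f i).1 : ℕ) < k (f i).2.succ) :
    c ≤ #(cutCells A k) := by
  simpa using card_le_card_of_injOn (s := univ) f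
    (fun i _ => by simp [cutCells, hk i, hf.1 i]) hf.strictMono_fst.injective.of_comp.injOn

end IsIncreasingPath

def pathCut {c : ℕ} (f : Fin c → Fin m × Fin n) (t : Fin (n + 1)) : ℕ :=
  if t = Fin.last n then m
  else (univ.filter fun i => (f i).2.castSucc < t).sup fun i => (f i).1 + 1

section PathCut

variable {c : ℕ} (f : Fin c → Fin m × Fin n)

theorem pathCut_le (t : Fin (n + 1)) : pathCut f t ≤ m := by
  unfold pathCut
  split_ifs
  · exact le_rfl
  · exact Finset.sup_le fun i _ => (f i).1.isLt

theorem pathCut_last : pathCut f (Fin.last n) = m :=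
  if_pos rfl

theorem pathCut_monotone : Monotone (pathCut f) := by
  intro t t' htt'
  by_cases ht' : t' = Fin.last n
  · rw [ht', pathCut_last]
    exact pathCut_le f t
  · have ht : t ≠ Fin.last n := (htt'.trans_lt (Fin.lt_last_iff_ne_last.mpr ht')).ne
    rw [pathCut, pathCut, if_neg ht, if_neg ht']
    exact Finset.sup_mono (monotone_filter_right _ fun _ _ hi => hi.trans_le htt')

theorem pathCut_zero (hn : n ≠ 0) : pathCut f 0 = 0 := by
  rw [pathCut, if_neg (by simpa [Fin.ext_iff] using hn.symm)]
  simp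

theorem fst_lt_pathCut (i : Fin c) : ((f i).1 : ℕ) < pathCut f (f i).2.succ := by
  unfold pathCut
  split_ifs
  · exact (f i).1.isLt
  · exact Finset.le_sup (f := fun i => ((f i).1 : ℕ) + 1) (by simp)

variable {A f}

theorem IsIncreasingPath.pathCut_le_fst (hf : IsIncreasingPath A f) (i : Fin c) :
    pathCut f (f i).2.castSucc ≤ (f i).1 := by
  rw [pathCut, if_neg (Fin.castSucc_lt_last _).ne]
  refine Finset.sup_le fun i' hi' => ?_
  rw [mem_filter, Fin.castSucc_lt_castSucc_iff] at hi'
  exact (hf.2 i' i (hf.lt_of_snd_lt hi'.2)).1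

theorem IsIncreasingPath.exists_cut (hf : IsIncreasingPath A f) (hc : 0 < c) :
    ∃ k : Fin (n + 1) → ℕ, Monotone k ∧ k 0 = 0 ∧ k (Fin.last n) = m ∧ c ≤ #(cutCells A k) :=
  ⟨pathCut f, pathCut_monotone f, pathCut_zero f (f ⟨0, hc⟩).2.pos.ne', pathCut_last f,
    hf.length_le_card_cutCells fun i => ⟨hf.pathCut_le_fst i, fst_lt_pathCut f i⟩⟩

end PathCut

theorem exists_isIncreasingPath_of_monotone {g : Fin m → Fin n} (hg : Monotone g) :
    ∃ f : Fin #{i | A (i, g i) = true} → Fin m × Fin n, IsIncreasingPath A f := by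
  let e := orderEmbOfFin (univ.filter fun i => A (i, g i) = true) rfl
  exact ⟨fun i => (e i, g (e i)), fun i => (mem_filter.mp (orderEmbOfFin_mem _ rfl i)).2,
    fun i j h => ⟨e.strictMono h, hg (e.strictMono h).le⟩⟩

theorem card_cutCells_le {k : Fin (n + 1) → ℕ} (hk : Monotone k) {g : Fin m → Fin n}
    (hg : ∀ i, k (g i).castSucc ≤ i ∧ (i : ℕ) < k (g i).succ) :
    #(cutCells A k) ≤ #{i | A (i, g i) = true} := by
  have hcol : ∀ p ∈ cutCells A k, g p.1 = p.2 := fun p hp => by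
    simp only [cutCells, mem_filter, mem_univ, true_and] at hp
    exact le_antisymm (hk.le_of_castSucc_le_of_lt_succ (hg p.1).1 le_rfl hp.2.1)
      (hk.le_of_castSucc_le_of_lt_succ hp.1 le_rfl (hg p.1).2)
  refine card_le_card_of_injOn Prod.fst (fun p hp => ?_)
    fun p hp q hq h => Prod.ext h ((hcol p hp).symm.trans (h ▸ hcol q hq))
  simp only [coe_filter, mem_univ, true_and, Set.mem_ofPred_eq, hcol p hp]
  exact (mem_filter.mp hp).2.2.2

theorem exists_isIncreasingPath_of_cut {k : Fin (n + 1) → ℕ} (hk : Monotone k) (hk0 : k 0 = 0)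
    (hklast : k (Fin.last n) = m) :
    ∃ c ∈ {c | ∃ f : Fin c → Fin m × Fin n, IsIncreasingPath A f}, #(cutCells A k) ≤ c := by
  choose g hg using fun i : Fin m =>
    Fin.exists_castSucc_le_and_lt_succ k (hk0.trans_le (Nat.zero_le i)) (hklast ▸ i.isLt)
  have hg_mono : Monotone g := fun i i' h =>
    hk.le_of_castSucc_le_of_lt_succ (hg i).1 (Fin.val_le_of_le h) (hg i').2
  exact ⟨_, exists_isIncreasingPath_of_monotone A hg_mono, card_cutCells_le A hk hg⟩

/-- Column decomposition of the longest increasing path: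
`L(A) = max{Σ_j (S^j_{k_j} − S^j_{k_{j−1}}) : 0 = k_0 ≤ k_1 ≤ ⋯ ≤ k_n = m}`. -/
theorem pathLen_eq_column_decomposition {m n : ℕ} (A : Fin m × Fin n → Bool) :
    pathLen A =
      sSup {v | ∃ k : Fin (n + 1) → ℕ, Monotone k ∧ k 0 = 0 ∧ k (Fin.last n) = m ∧
        v = ∑ j : Fin n, (colCount A j (k j.succ) - colCount A j (k j.castSucc))} := by
  rw [pathLen_eq_sSup_isIncreasingPath]
  refine Nat.sSup_eq_sSup_of_forall_exists_le ⟨m, fun c ⟨_, hf⟩ => hf.length_le⟩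
    (fun c ⟨_, hf⟩ hc => ?_) ?_
  · obtain ⟨k, hk, hk0, hklast, hck⟩ := hf.exists_cut hc
    exact ⟨_, ⟨k, hk, hk0, hklast, rfl⟩, card_cutCells A hk ▸ hck⟩
  · rintro _ ⟨k, hk, hk0, hklast, rfl⟩
    exact card_cutCells A hk ▸ exists_isIncreasingPath_of_cut A hk hk0 hklast
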